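/- Let P be a finite poset and v ∈ P. Let η_v = T_{x₁} ∘ ⋯ ∘ T_{x_k} where (x₁, …, x_k) is a linear extension of the subposet {x ∈ P : x < v}, and define τ_v* = η_v ∘ T_v ∘ η_v⁻¹ and ε_v* = η_v ∘ E_v ∘ η_v⁻¹. Then Θ ∘ Δ⁻¹ ∘ τ_v = τ_v* ∘ Θ ∘ Δ⁻¹ and Θ ∘ Δ⁻¹ ∘ ε_v = ε_v* ∘ Θ ∘ Δ⁻¹, on all S-labelings for which both sides are defined (i.e., every element inverted in the computation is nonzero). -/

import Mathlib

/-!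
Noncommutative (skew field) antichain/order toggling and rowmotion on a finite poset `P`,
with labels in a division ring `S` and a fixed central element `C`, following
Joseph–Roby, "Birational and noncommutative lifts of antichain toggling and rowmotion".
All maps are partial; definedness ("every element inverted in the computation is
nonzero") is recorded by explicit predicates.
-/

open Finset

attribute [local instance] Classical.propDecidable

variable {P : Type*} [Fintype P] [PartialOrder P] {S : Type*} [DivisionRing S]

/-- `c` is a saturated chain in `P`: consecutive entries are covers. -/
def SatChain {P : Type*} [PartialOrder P] {k : ℕ} (c : Fin (k + 1) → P) : Prop :=
  ∀ i : Fin k, c i.castSucc ⋖ c i.succ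

/-- `c` is a maximal chain of `P`: a saturated chain from a minimal element to a maximal
element of `P` (equivalently, the restriction to `P` of a maximal chain
`0̂ ⋖ y₁ ⋖ ⋯ ⋖ y_k ⋖ 1̂` of `P̂`). -/
def MaxChain {P : Type*} [PartialOrder P] {k : ℕ} (c : Fin (k + 1) → P) : Prop :=
  SatChain c ∧ IsMin (c 0) ∧ IsMax (c (Fin.last k))

/-- `∑_{u ∈ P̂, u ⋖ v} f(u)`, with the convention `f(0̂) = 1`. -/
noncomputable def lSum (f : P → S) (v : P) : S :=
  (if IsMin v then 1 else 0) + ∑ u ∈ univ.filter (fun u => u ⋖ v), f u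

/-- `∑_{u ∈ P̂, u ⋗ v} f(u)⁻¹`, with the convention `f(1̂) = C`; its inverse is the
parallel sum `⫲_{u ∈ P̂, u ⋗ v} f(u)` (where `x ⫲ y = (x⁻¹ + y⁻¹)⁻¹`). -/
noncomputable def uInvSum (C : S) (f : P → S) (v : P) : S :=
  (if IsMax v then C⁻¹ else 0) + ∑ u ∈ univ.filter (fun u => v ⋖ u), (f u)⁻¹

/-- The noncommutative order toggle `T_v`: it replaces the label at `v` by
`(∑_{u ∈ P̂, u ⋖ v} f(u)) · f(v)⁻¹ · (⫲_{u ∈ P̂, u ⋗ v} f(u))` and fixes all other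
labels. -/
noncomputable def ncT (C : S) (v : P) (f : P → S) : P → S :=
  fun x => if x = v then lSum f v * (f v)⁻¹ * (uInvSum C f v)⁻¹ else f x

/-- The noncommutative order elggot `E_v`: it replaces the label at `v` by
`(⫲_{u ∈ P̂, u ⋗ v} f(u)) · f(v)⁻¹ · (∑_{u ∈ P̂, u ⋖ v} f(u))` and fixes all other
labels. -/
noncomputable def ncE (C : S) (v : P) (f : P → S) : P → S :=
  fun x => if x = v then (uInvSum C f v)⁻¹ * (f v)⁻¹ * lSum f v else f x

/-- Definedness of one application of `T_v` or `E_v` to `f`: every element inverted in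
the computation (the label `f(v)`, the labels `f(u)` of the upper covers `u` of `v` in
`P̂`, and the sum of their inverses) is nonzero. -/
def ncODef (C : S) (v : P) (f : P → S) : Prop :=
  f v ≠ 0 ∧ (∀ u : P, v ⋖ u → f u ≠ 0) ∧ (IsMax v → C ≠ 0) ∧ uInvSum C f v ≠ 0

/-- The element `∑ g(y_{c-1})⋯g(y₁) · g(y_k)⋯g(y_c)` inverted by the noncommutative
antichain toggle `τ_v`, summed over all maximal chains `0̂ ⋖ y₁ ⋖ ⋯ ⋖ y_k ⋖ 1̂` of `P̂`
with `y_c = v` (indices decrease by 1 within each factor). -/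
noncomputable def tauDenom (g : P → S) (v : P) : S :=
  ∑ k ∈ range (Fintype.card P),
    ∑ c ∈ univ.filter (fun c : Fin (k + 1) → P => MaxChain c),
      ∑ j ∈ univ.filter (fun j : Fin (k + 1) => c j = v),
        (((List.ofFn (g ∘ c)).take j.1).reverse).prod *
          (((List.ofFn (g ∘ c)).drop j.1).reverse).prod

/-- The element `∑ g(y_c)⋯g(y₁) · g(y_k)⋯g(y_{c+1})` inverted by the noncommutative
antichain elggot `ε_v`, summed over all maximal chains `0̂ ⋖ y₁ ⋖ ⋯ ⋖ y_k ⋖ 1̂` of `P̂`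
with `y_c = v`. -/
noncomputable def epsDenom (g : P → S) (v : P) : S :=
  ∑ k ∈ range (Fintype.card P),
    ∑ c ∈ univ.filter (fun c : Fin (k + 1) → P => MaxChain c),
      ∑ j ∈ univ.filter (fun j : Fin (k + 1) => c j = v),
        (((List.ofFn (g ∘ c)).take (j.1 + 1)).reverse).prod *
          (((List.ofFn (g ∘ c)).drop (j.1 + 1)).reverse).prod

/-- The noncommutative antichain toggle `τ_v`: it replaces the label at `v` by
`C · (∑ g(y_{c-1})⋯g(y₁) · g(y_k)⋯g(y_c))⁻¹` and fixes all other labels. -/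
noncomputable def ncTau (C : S) (v : P) (g : P → S) : P → S :=
  fun x => if x = v then C * (tauDenom g v)⁻¹ else g x

/-- The noncommutative antichain elggot `ε_v`: it replaces the label at `v` by
`C · (∑ g(y_c)⋯g(y₁) · g(y_k)⋯g(y_{c+1}))⁻¹` and fixes all other labels. -/
noncomputable def ncEps (C : S) (v : P) (g : P → S) : P → S :=
  fun x => if x = v then C * (epsDenom g v)⁻¹ else g x

/-- The noncommutative complement `Θ`: `(Θf)(x) = C · f(x)⁻¹`. -/
noncomputable def ncTheta (C : S) (f : P → S) : P → S := fun x => C * (f x)⁻¹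

/-- The noncommutative down transfer `∇`:
`(∇f)(x) = f(x) · (∑_{y ∈ P̂, y ⋖ x} f(y))⁻¹` with `f(0̂) = 1`. -/
noncomputable def ncNabla (f : P → S) : P → S := fun x => f x * (lSum f x)⁻¹

/-- The noncommutative inverse up transfer `Δ⁻¹`:
`(Δ⁻¹f)(x) = ∑ f(y_k)⋯f(y₂)f(y₁)` over all saturated chains
`x = y₁ ⋖ y₂ ⋖ ⋯ ⋖ y_k ⋖ 1̂` in `P̂`. -/
noncomputable def ncDeltaInv (f : P → S) : P → S := fun x =>
  ∑ k ∈ range (Fintype.card P),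
    ∑ c ∈ univ.filter (fun c : Fin (k + 1) → P =>
        SatChain c ∧ c 0 = x ∧ IsMax (c (Fin.last k))),
      ((List.ofFn (f ∘ c)).reverse).prod

/-- The noncommutative inverse down transfer `∇⁻¹`:
`(∇⁻¹f)(x) = ∑ f(y_k)⋯f(y₂)f(y₁)` over all saturated chains
`0̂ ⋖ y₁ ⋖ y₂ ⋖ ⋯ ⋖ y_k = x` in `P̂`. -/
noncomputable def ncNablaInv (f : P → S) : P → S := fun x =>
  ∑ k ∈ range (Fintype.card P),
    ∑ c ∈ univ.filter (fun c : Fin (k + 1) → P =>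
        SatChain c ∧ IsMin (c 0) ∧ c (Fin.last k) = x),
      ((List.ofFn (f ∘ c)).reverse).prod

/-- `l` is a linear extension of `P`: it lists every element of `P` exactly once, and
`l[i] < l[j]` in `P` implies `i < j`. -/
def IsLinearExtension {P : Type*} [PartialOrder P] (l : List P) : Prop :=
  l.Nodup ∧ (∀ x : P, x ∈ l) ∧
    ∀ (i j : ℕ) (hi : i < l.length) (hj : j < l.length), l[i]'hi < l[j]'hj → i < j

/-- `l` is a linear extension of the subposet `A` of `P`. -/
def IsLinearExtensionOn {P : Type*} [PartialOrder P] (A : Set P) (l : List P) : Prop :=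
  l.Nodup ∧ (∀ x : P, x ∈ l ↔ x ∈ A) ∧
    ∀ (i j : ℕ) (hi : i < l.length) (hj : j < l.length), l[i]'hi < l[j]'hj → i < j

/-- An order toggle (`T`) or order elggot (`E`) operation. -/
inductive OOp (P : Type*) where
  | T : P → OOp P
  | E : P → OOp P

/-- The poset element at which an operation acts. -/
def OOp.el {P : Type*} : OOp P → P
  | .T v => v
  | .E v => v

/-- Apply one order toggle/elggot operation. -/
noncomputable def applyOOp (C : S) : OOp P → (P → S) → (P → S)
  | .T v => ncT C v
  | .E v => ncE C v

/-- Apply a sequence of order toggle/elggot operations, first element of the list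
applied first. -/
noncomputable def applyOOps (C : S) (l : List (OOp P)) (f : P → S) : P → S :=
  l.foldl (fun h o => applyOOp C o h) f

/-- Stepwise definedness of applying a sequence of order toggle/elggot operations:
every element inverted in the computation is nonzero. -/
def OOpsDef (C : S) : List (OOp P) → (P → S) → Prop
  | [], _ => True
  | o :: l, f => ncODef C o.el f ∧ OOpsDef C l (applyOOp C o f)

/-- The sequence of operations realizing `τ_v* = η_v ∘ T_v ∘ η_v⁻¹`, listed in order of
application: first `η_v⁻¹ = E_{x_k} ∘ ⋯ ∘ E_{x₁}` (so `E_{x₁}` first), then `T_v`, then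
`η_v = T_{x₁} ∘ ⋯ ∘ T_{x_k}` (so `T_{x_k}` first), where `le = (x₁,…,x_k)` is a linear
extension of `{x ∈ P : x < v}`. -/
def tauStarOps {P : Type*} (v : P) (le : List P) : List (OOp P) :=
  le.map OOp.E ++ [OOp.T v] ++ (le.reverse).map OOp.T

/-- The sequence of operations realizing `ε_v* = η_v ∘ E_v ∘ η_v⁻¹`, listed in order of
application. -/
def epsStarOps {P : Type*} (v : P) (le : List P) : List (OOp P) :=
  le.map OOp.E ++ [OOp.E v] ++ (le.reverse).map OOp.T

/-!
Write `M(x) = [x maximal] + ∑_{y ⋗ x} (Δ⁻¹g)(y)` and `W(x) = [x minimal] + ∑_{y ⋖ x} (∇⁻¹g)(y)`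
(`deltaInvAbove`, `nablaInvBelow`). Removing the first, resp. last, element of a chain gives
`(Δ⁻¹g)(x) = M(x) g(x)` and `(∇⁻¹g)(x) = g(x) W(x)`, and cutting maximal chains at `v` shows that
the sums inverted by `τ_v` and `ε_v` are `W(v) (Δ⁻¹g)(v)` and `(∇⁻¹g)(v) M(v)`.

Apply `τ_v*` to `Θ Δ⁻¹ g`. Along the linear extension, `E_x` sees its lower covers already
relabelled by `∇⁻¹g` and its upper covers still labelled `C (Δ⁻¹g)⁻¹`, so it turns
`C (M(x) g(x))⁻¹` into `(M(x) C⁻¹)⁻¹ (C (M(x) g(x))⁻¹)⁻¹ W(x) = g(x) W(x)`, using only that `C`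
is central. On the resulting labeling (`mixedLabeling`), `T_v` (resp. `E_v`) writes at `v` the
label `C ((Δ⁻¹g')(v))⁻¹` for `g' = τ_v g` (resp. `ε_v g`). As `Δ⁻¹` reads labels only upwards and
`∇⁻¹` only downwards, this is the same mixed labeling built from `g'`, and the toggles of `η_v`
undo the first phase for `g'`, ending at `Θ Δ⁻¹ g'`.
-/

theorem List.ofFn_snoc {α : Type*} {n : ℕ} (c : Fin n → α) (x : α) :
    List.ofFn (Fin.snoc c x : Fin (n + 1) → α) = List.ofFn c ++ [x] := by
  rw [List.ofFn_succ']
  simp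

theorem setOf_mem_append_singleton {α : Type*} (p : List α) (x : α) :
    {u | u ∈ p ++ [x]} = insert x {u | u ∈ p} := by
  ext u
  simp [or_comm]

theorem sum_range_triangle_eq_sum_range_square {M : Type*} [AddCommMonoid M] (N : ℕ)
    (G : ℕ → ℕ → M) (hG : ∀ k j, N ≤ k → G k j = 0) :
    ∑ k ∈ range N, ∑ j ∈ range (k + 1), G k j = ∑ a ∈ range N, ∑ b ∈ range N, G (a + b) a := by
  have hIco : ∀ a ∈ range N, ∑ b ∈ range N, G (a + b) a = ∑ k ∈ Ico a N, G k a := fun a ha => by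
    rw [Finset.sum_Ico_eq_sum_range]
    exact (Finset.sum_subset (Finset.range_subset_range.2 (Nat.sub_le N a))
      fun b _ hb => hG _ _ (by simp at hb; omega)).symm
  rw [Finset.sum_congr rfl hIco]
  exact Finset.sum_comm' fun k a => by simp only [mem_range, mem_Ico]; omega

section SaturatedChains

variable {α : Type*} [PartialOrder α] {k : ℕ}

theorem SatChain.strictMono {c : Fin (k + 1) → α} (hc : SatChain c) : StrictMono c :=
  Fin.strictMono_iff_lt_succ.2 fun i => (hc i).lt

theorem satChain_iff_forall_lt {c : Fin (k + 1) → α} :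
    SatChain c ↔ ∀ i (h : i < k), c ⟨i, by omega⟩ ⋖ c ⟨i + 1, by omega⟩ :=
  ⟨fun hc i h => hc ⟨i, h⟩, fun hc i => hc i i.2⟩

theorem SatChain.card_le [Fintype α] {c : Fin (k + 1) → α} (hc : SatChain c) :
    k + 1 ≤ Fintype.card α := by
  simpa using Fintype.card_le_of_injective c hc.strictMono.injective

theorem satChain_cons_iff (x : α) (c : Fin (k + 1) → α) :
    SatChain (Fin.cons x c : Fin (k + 2) → α) ↔ x ⋖ c 0 ∧ SatChain c := by
  simp [SatChain, Fin.forall_fin_succ]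

theorem satChain_snoc_iff (c : Fin (k + 1) → α) (x : α) :
    SatChain (Fin.snoc c x : Fin (k + 2) → α) ↔ SatChain c ∧ c (Fin.last k) ⋖ x := by
  simp [SatChain, Fin.forall_fin_succ', -Fin.castSucc_succ, Fin.succ_castSucc]

end SaturatedChains

section ChainSums

variable {M : Type*} [AddCommMonoid M]

noncomputable def upChains (k : ℕ) (x : P) : Finset (Fin (k + 1) → P) :=
  univ.filter fun c => SatChain c ∧ c 0 = x ∧ IsMax (c (Fin.last k))

noncomputable def downChains (k : ℕ) (x : P) : Finset (Fin (k + 1) → P) :=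
  univ.filter fun c => SatChain c ∧ IsMin (c 0) ∧ c (Fin.last k) = x

theorem sum_upChains_zero (x : P) (F : (Fin 1 → P) → M) :
    ∑ c ∈ upChains 0 x, F c = if IsMax x then F (fun _ => x) else 0 := by
  split_ifs with hx
  · refine Finset.sum_eq_single_of_mem _ ?_ fun c hc hne => (hne ?_).elim
    · simpa [upChains] using ⟨fun i => i.elim0, hx⟩
    · simp only [upChains, mem_filter] at hc
      exact funext fun i => Fin.fin_one_eq_zero i ▸ hc.2.2.1
  · refine Finset.sum_eq_zero fun c hc => ?_
    simp only [upChains, mem_filter] at hc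
    exact (hx (hc.2.2.1 ▸ hc.2.2.2)).elim

theorem sum_downChains_zero (x : P) (F : (Fin 1 → P) → M) :
    ∑ c ∈ downChains 0 x, F c = if IsMin x then F (fun _ => x) else 0 := by
  split_ifs with hx
  · refine Finset.sum_eq_single_of_mem _ ?_ fun c hc hne => (hne ?_).elim
    · simpa [downChains] using ⟨fun i => i.elim0, hx⟩
    · simp only [downChains, mem_filter] at hc
      exact funext fun i => Fin.fin_one_eq_zero i ▸ hc.2.2.2
  · refine Finset.sum_eq_zero fun c hc => ?_
    simp only [downChains, mem_filter] at hc
    exact (hx (hc.2.2.2 ▸ hc.2.2.1)).elim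

theorem sum_upChains_succ (k : ℕ) (x : P) (F : (Fin (k + 2) → P) → M) :
    ∑ c ∈ upChains (k + 1) x, F c
      = ∑ y ∈ univ.filter (x ⋖ ·), ∑ c ∈ upChains k y, F (Fin.cons x c) := by
  set s := univ.filter fun c : Fin (k + 1) → P =>
    x ⋖ c 0 ∧ SatChain c ∧ IsMax (c (Fin.last k))
  calc ∑ c ∈ upChains (k + 1) x, F c = ∑ c ∈ s, F (Fin.cons x c) := by
        refine Finset.sum_nbij' Fin.tail (fun c => (Fin.cons x c : Fin (k + 2) → P))
          (fun c hc => ?_) (fun c hc => ?_) (fun c hc => ?_)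
          (fun c _ => Fin.tail_cons (α := fun _ => P) x c) (fun c hc => ?_) <;>
          simp only [upChains, s, mem_filter, mem_univ, true_and] at hc ⊢
        · obtain ⟨hsat, rfl, hmax⟩ := hc
          rw [← Fin.cons_self_tail c, satChain_cons_iff] at hsat
          exact ⟨hsat.1, hsat.2, hmax⟩
        · simpa [satChain_cons_iff, ← Fin.succ_last, and_assoc] using hc
        · exact hc.2.1 ▸ Fin.cons_self_tail c
        · rw [← hc.2.1, Fin.cons_self_tail]
    _ = ∑ y ∈ univ.filter (x ⋖ ·), ∑ c ∈ s.filter (· 0 = y), F (Fin.cons x c) :=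
        (Finset.sum_fiberwise_of_maps_to (fun c hc => by simp_all [s]) _).symm
    _ = _ := by
        refine Finset.sum_congr rfl fun y hy => Finset.sum_congr ?_ fun _ _ => rfl
        ext c
        simp only [upChains, s, mem_filter, mem_univ, true_and] at hy ⊢
        constructor
        · rintro ⟨⟨-, h, h'⟩, rfl⟩; exact ⟨h, rfl, h'⟩
        · rintro ⟨h, rfl, h'⟩; exact ⟨⟨hy, h, h'⟩, rfl⟩

theorem sum_downChains_succ (k : ℕ) (x : P) (F : (Fin (k + 2) → P) → M) :
    ∑ c ∈ downChains (k + 1) x, F c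
      = ∑ y ∈ univ.filter (· ⋖ x), ∑ c ∈ downChains k y, F (Fin.snoc c x) := by
  set s := univ.filter fun c : Fin (k + 1) → P =>
    c (Fin.last k) ⋖ x ∧ SatChain c ∧ IsMin (c 0)
  calc ∑ c ∈ downChains (k + 1) x, F c = ∑ c ∈ s, F (Fin.snoc c x) := by
        refine Finset.sum_nbij' Fin.init (Fin.snoc · x) (fun c hc => ?_) (fun c hc => ?_)
          (fun c hc => ?_) (fun c _ => Fin.init_snoc (α := fun _ => P) x c) (fun c hc => ?_) <;>
          simp only [downChains, s, mem_filter, mem_univ, true_and] at hc ⊢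
        · obtain ⟨hsat, hmin, rfl⟩ := hc
          rw [← Fin.snoc_init_self c, satChain_snoc_iff] at hsat
          exact ⟨hsat.2, hsat.1, hmin⟩
        · rw [satChain_snoc_iff, Fin.snoc_last, ← Fin.castSucc_zero, Fin.snoc_castSucc]
          exact ⟨⟨hc.2.1, hc.1⟩, hc.2.2, rfl⟩
        · exact hc.2.2 ▸ Fin.snoc_init_self c
        · rw [← hc.2.2, Fin.snoc_init_self]
    _ = ∑ y ∈ univ.filter (· ⋖ x), ∑ c ∈ s.filter (· (Fin.last k) = y), F (Fin.snoc c x) :=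
        (Finset.sum_fiberwise_of_maps_to (fun c hc => by simp_all [s]) _).symm
    _ = _ := by
        refine Finset.sum_congr rfl fun y hy => Finset.sum_congr ?_ fun _ _ => rfl
        ext c
        simp only [downChains, s, mem_filter, mem_univ, true_and] at hy ⊢
        constructor
        · rintro ⟨⟨-, h, h'⟩, rfl⟩; exact ⟨h, h', rfl⟩
        · rintro ⟨h, h', rfl⟩; exact ⟨⟨hy, h, h'⟩, rfl⟩

theorem sum_range_card_upChains_tail (x : P) (F : List P → M) :
    ∑ k ∈ range (Fintype.card P), ∑ c ∈ upChains k x, F (List.ofFn c).tail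
      = (if IsMax x then F [] else 0)
        + ∑ y ∈ univ.filter (x ⋖ ·), ∑ k ∈ range (Fintype.card P),
            ∑ c ∈ upChains k y, F (List.ofFn c) := by
  have hlong : ∑ c ∈ upChains (Fintype.card P) x, F (List.ofFn c).tail = 0 :=
    Finset.sum_eq_zero fun c hc => by
      have := (Finset.mem_filter.1 hc).2.1.card_le; omega
  have hext := Finset.sum_range_succ
    (fun k => ∑ c ∈ upChains k x, F (List.ofFn c).tail) (Fintype.card P)
  rw [hlong, add_zero] at hext
  rw [← hext, Finset.sum_range_succ', sum_upChains_zero, add_comm, Finset.sum_comm]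
  simp only [sum_upChains_succ, List.ofFn_cons, List.tail_cons]
  simp

theorem sum_range_card_downChains_dropLast (x : P) (F : List P → M) :
    ∑ k ∈ range (Fintype.card P), ∑ c ∈ downChains k x, F (List.ofFn c).dropLast
      = (if IsMin x then F [] else 0)
        + ∑ y ∈ univ.filter (· ⋖ x), ∑ k ∈ range (Fintype.card P),
            ∑ c ∈ downChains k y, F (List.ofFn c) := by
  have hlong : ∑ c ∈ downChains (Fintype.card P) x, F (List.ofFn c).dropLast = 0 :=
    Finset.sum_eq_zero fun c hc => by
      have := (Finset.mem_filter.1 hc).2.1.card_le; omega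
  have hext := Finset.sum_range_succ
    (fun k => ∑ c ∈ downChains k x, F (List.ofFn c).dropLast) (Fintype.card P)
  rw [hlong, add_zero] at hext
  rw [← hext, Finset.sum_range_succ', sum_downChains_zero, add_comm, Finset.sum_comm]
  simp only [sum_downChains_succ, List.ofFn_snoc, List.dropLast_concat]
  simp

end ChainSums

section Transfers

def revProd {α M : Type*} [Monoid M] (g : α → M) (l : List α) : M :=
  (l.map g).reverse.prod

@[simp]
theorem revProd_nil {α M : Type*} [Monoid M] (g : α → M) : revProd g [] = 1 := rfl

@[simp]
theorem revProd_append {α M : Type*} [Monoid M] (g : α → M) (l₁ l₂ : List α) :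
    revProd g (l₁ ++ l₂) = revProd g l₂ * revProd g l₁ := by
  simp [revProd]

@[simp]
theorem revProd_cons {α M : Type*} [Monoid M] (g : α → M) (x : α) (l : List α) :
    revProd g (x :: l) = revProd g l * g x := by
  simp [revProd]

noncomputable def deltaInvAbove (g : P → S) (x : P) : S :=
  (if IsMax x then 1 else 0) + ∑ y ∈ univ.filter (x ⋖ ·), ncDeltaInv g y

noncomputable def nablaInvBelow (g : P → S) (x : P) : S :=
  (if IsMin x then 1 else 0) + ∑ y ∈ univ.filter (· ⋖ x), ncNablaInv g y

variable (g : P → S) (x : P)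

theorem ncDeltaInv_eq_sum_revProd :
    ncDeltaInv g x
      = ∑ k ∈ range (Fintype.card P), ∑ c ∈ upChains k x, revProd g (List.ofFn c) := by
  simp only [ncDeltaInv, upChains, revProd, List.map_ofFn]

theorem ncNablaInv_eq_sum_revProd :
    ncNablaInv g x
      = ∑ k ∈ range (Fintype.card P), ∑ c ∈ downChains k x, revProd g (List.ofFn c) := by
  simp only [ncNablaInv, downChains, revProd, List.map_ofFn]

theorem sum_upChains_revProd_tail :
    ∑ k ∈ range (Fintype.card P), ∑ c ∈ upChains k x, revProd g (List.ofFn c).tail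
      = deltaInvAbove g x := by
  rw [sum_range_card_upChains_tail, revProd_nil, deltaInvAbove]
  simp only [ncDeltaInv_eq_sum_revProd]

theorem sum_downChains_revProd_dropLast :
    ∑ k ∈ range (Fintype.card P), ∑ c ∈ downChains k x, revProd g (List.ofFn c).dropLast
      = nablaInvBelow g x := by
  rw [sum_range_card_downChains_dropLast, revProd_nil, nablaInvBelow]
  simp only [ncNablaInv_eq_sum_revProd]

theorem ncDeltaInv_eq_mul : ncDeltaInv g x = deltaInvAbove g x * g x := by
  simp_rw [ncDeltaInv_eq_sum_revProd, ← sum_upChains_revProd_tail, Finset.sum_mul]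
  refine Finset.sum_congr rfl fun k _ => Finset.sum_congr rfl fun c hc => ?_
  rw [List.ofFn_succ, revProd_cons, (Finset.mem_filter.1 hc).2.2.1, List.tail_cons]

theorem ncNablaInv_eq_mul : ncNablaInv g x = g x * nablaInvBelow g x := by
  simp_rw [ncNablaInv_eq_sum_revProd, ← sum_downChains_revProd_dropLast, Finset.mul_sum]
  refine Finset.sum_congr rfl fun k _ => Finset.sum_congr rfl fun c hc => ?_
  rw [← Fin.snoc_init_self c, List.ofFn_snoc, revProd_append, List.dropLast_concat,
    (Finset.mem_filter.1 hc).2.2.2]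
  simp [revProd]

end Transfers

section Splitting

variable {α : Type*} {a b : ℕ}

def chainPrefix (c : Fin (a + b + 1) → α) : Fin (a + 1) → α := fun i => c ⟨i, by omega⟩

def chainSuffix (c : Fin (a + b + 1) → α) : Fin (b + 1) → α := fun i => c ⟨a + i, by omega⟩

def chainJoin (d : Fin (a + 1) → α) (e : Fin (b + 1) → α) : Fin (a + b + 1) → α :=
  fun i => if h : i < a then d ⟨i, by omega⟩ else e ⟨i - a, by omega⟩

theorem chainPrefix_chainJoin {d : Fin (a + 1) → α} {e : Fin (b + 1) → α}
    (h : d (Fin.last a) = e 0) : chainPrefix (chainJoin d e) = d := by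
  funext i
  by_cases hi : (i : ℕ) < a
  · simp [chainPrefix, chainJoin, hi]
  · have : i = Fin.last a := Fin.ext (by simp; omega)
    subst this
    simp [chainPrefix, chainJoin, h]

theorem chainSuffix_chainJoin (d : Fin (a + 1) → α) (e : Fin (b + 1) → α) :
    chainSuffix (chainJoin d e) = e := by
  funext i
  simp [chainSuffix, chainJoin]

theorem chainJoin_chainPrefix_chainSuffix (c : Fin (a + b + 1) → α) :
    chainJoin (chainPrefix c) (chainSuffix c) = c := by
  funext i
  by_cases hi : (i : ℕ) < a
  · simp [chainPrefix, chainJoin, hi]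
  · simp only [chainPrefix, chainSuffix, chainJoin, hi, dite_false]
    congr 1
    ext
    simp only; omega

theorem ofFn_chainPrefix (c : Fin (a + b + 1) → α) :
    List.ofFn (chainPrefix c) = (List.ofFn c).take (a + 1) :=
  List.ext_getElem (by simp) fun i _ _ => by
    simp only [chainPrefix, List.getElem_ofFn, List.getElem_take]

theorem ofFn_chainSuffix (c : Fin (a + b + 1) → α) :
    List.ofFn (chainSuffix c) = (List.ofFn c).drop a :=
  List.ext_getElem (by simp; omega) fun i _ _ => by
    simp only [chainSuffix, List.getElem_ofFn, List.getElem_drop]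

theorem satChain_iff_chainPrefix_chainSuffix [PartialOrder α] (c : Fin (a + b + 1) → α) :
    SatChain c ↔ SatChain (chainPrefix c) ∧ SatChain (chainSuffix c) := by
  simp only [satChain_iff_forall_lt]
  refine ⟨fun h => ⟨fun i hi => h i (by omega), fun i hi => h (a + i) (by omega)⟩,
    fun ⟨h₁, h₂⟩ i hi => ?_⟩
  by_cases hia : i < a
  · exact h₁ i hia
  · simpa only [chainSuffix, show a + (i - a) = i by omega,
      show a + (i - a + 1) = i + 1 by omega] using h₂ (i - a) (by omega)

end Splitting

section MaximalChainSums

variable {R : Type*} [NonUnitalNonAssocSemiring R]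

theorem maxChain_and_apply_eq_iff {a b : ℕ} (v : P) (c : Fin (a + b + 1) → P) :
    MaxChain c ∧ c ⟨a, by omega⟩ = v ↔
      chainPrefix c ∈ downChains a v ∧ chainSuffix c ∈ upChains b v := by
  have hmin : chainPrefix c 0 = c 0 := congrArg c (Fin.ext (by simp))
  have hmid : chainSuffix c 0 = c ⟨a, by omega⟩ := congrArg c (Fin.ext (by simp))
  have hmax : chainSuffix c (Fin.last b) = c (Fin.last (a + b)) := rfl
  simp only [MaxChain, downChains, upChains, mem_filter, mem_univ, true_and,
    satChain_iff_chainPrefix_chainSuffix c, hmin, hmid, hmax]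
  exact ⟨fun ⟨⟨⟨h₁, h₂⟩, h₃, h₄⟩, h₅⟩ => ⟨⟨h₁, h₃, h₅⟩, h₂, h₅, h₄⟩,
    fun ⟨⟨h₁, h₃, h₅⟩, h₂, _, h₄⟩ => ⟨⟨⟨h₁, h₂⟩, h₃, h₄⟩, h₅⟩⟩

theorem sum_maxChain_apply_eq_mul (a b : ℕ) (v : P) (F G : List P → R) :
    ∑ c ∈ univ.filter (fun c : Fin (a + b + 1) → P => MaxChain c ∧ c ⟨a, by omega⟩ = v),
        F ((List.ofFn c).take (a + 1)) * G ((List.ofFn c).drop a)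
      = (∑ d ∈ downChains a v, F (List.ofFn d)) * ∑ e ∈ upChains b v, G (List.ofFn e) := by
  rw [Finset.sum_mul_sum, ← Finset.sum_product']
  refine Finset.sum_nbij' (fun c => (chainPrefix c, chainSuffix c)) (fun p => chainJoin p.1 p.2)
    (fun c hc => ?_) (fun p hp => ?_) (fun c _ => chainJoin_chainPrefix_chainSuffix c)
    (fun p hp => ?_) (fun c _ => by rw [ofFn_chainPrefix, ofFn_chainSuffix])
  · rw [mem_filter, maxChain_and_apply_eq_iff] at hc
    exact mem_product.2 hc.2
  · rw [mem_product] at hp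
    have hjoin := chainPrefix_chainJoin <|
      (mem_filter.1 hp.1).2.2.2.trans (mem_filter.1 hp.2).2.2.1.symm
    rw [mem_filter, maxChain_and_apply_eq_iff, hjoin, chainSuffix_chainJoin]
    exact ⟨mem_univ _, hp⟩
  · rw [mem_product] at hp
    rw [chainPrefix_chainJoin ((mem_filter.1 hp.1).2.2.2.trans (mem_filter.1 hp.2).2.2.1.symm),
      chainSuffix_chainJoin]

theorem sum_maxChain_through_eq_mul (v : P) (F G : List P → R) :
    ∑ k ∈ range (Fintype.card P), ∑ c ∈ univ.filter (fun c : Fin (k + 1) → P => MaxChain c),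
        ∑ j ∈ univ.filter (fun j : Fin (k + 1) => c j = v),
          F ((List.ofFn c).take (j + 1)) * G ((List.ofFn c).drop j)
      = (∑ a ∈ range (Fintype.card P), ∑ d ∈ downChains a v, F (List.ofFn d))
        * ∑ b ∈ range (Fintype.card P), ∑ e ∈ upChains b v, G (List.ofFn e) := by
  set Y : ℕ → ℕ → R := fun k j => if h : j < k + 1 then
    ∑ c ∈ univ.filter (fun c : Fin (k + 1) → P => MaxChain c ∧ c ⟨j, h⟩ = v),
      F ((List.ofFn c).take (j + 1)) * G ((List.ofFn c).drop j) else 0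
  have hY : ∀ k, ∑ c ∈ univ.filter (fun c : Fin (k + 1) → P => MaxChain c),
      ∑ j ∈ univ.filter (fun j : Fin (k + 1) => c j = v),
        F ((List.ofFn c).take (j + 1)) * G ((List.ofFn c).drop j)
      = ∑ j ∈ range (k + 1), Y k j := fun k => by
    rw [← Fin.sum_univ_eq_sum_range]
    refine (Finset.sum_comm' (t' := univ)
      (s' := fun j => univ.filter fun c => MaxChain c ∧ c j = v) fun c j => ?_).trans
      (Finset.sum_congr rfl fun j _ => ?_)
    · simp only [mem_filter, mem_univ, true_and]; tauto
    · simp only [Y, dif_pos j.2, Fin.eta]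
  have hvanish : ∀ k j, Fintype.card P ≤ k → Y k j = 0 := fun k j hk => by
    refine dite_eq_right_iff.2 fun _ => Finset.sum_eq_zero fun c hc => ?_
    have := (mem_filter.1 hc).2.1.1.card_le
    omega
  rw [Finset.sum_congr rfl fun k _ => hY k, sum_range_triangle_eq_sum_range_square _ Y hvanish,
    Finset.sum_mul_sum]
  refine Finset.sum_congr rfl fun a _ => Finset.sum_congr rfl fun b _ => ?_
  simp only [Y, dif_pos (show a < a + b + 1 by omega)]
  exact sum_maxChain_apply_eq_mul a b v F G

end MaximalChainSums

theorem tauDenom_eq_mul (g : P → S) (v : P) :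
    tauDenom g v = nablaInvBelow g v * ncDeltaInv g v := by
  rw [← sum_downChains_revProd_dropLast, ncDeltaInv_eq_sum_revProd,
    ← sum_maxChain_through_eq_mul v (fun l => revProd g l.dropLast) (revProd g)]
  refine Finset.sum_congr rfl fun k _ => Finset.sum_congr rfl fun c _ =>
    Finset.sum_congr rfl fun j _ => ?_
  rw [List.dropLast_eq_take, List.take_take, List.length_take, List.length_ofFn,
    show min (min ((j : ℕ) + 1) (k + 1) - 1) (j + 1) = j by omega]
  simp only [revProd, List.map_take, List.map_drop, List.map_ofFn]

theorem epsDenom_eq_mul (g : P → S) (v : P) :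
    epsDenom g v = ncNablaInv g v * deltaInvAbove g v := by
  rw [← sum_upChains_revProd_tail, ncNablaInv_eq_sum_revProd,
    ← sum_maxChain_through_eq_mul v (revProd g) (fun l => revProd g l.tail)]
  refine Finset.sum_congr rfl fun k _ => Finset.sum_congr rfl fun c _ =>
    Finset.sum_congr rfl fun j _ => ?_
  rw [List.tail_drop]
  simp only [revProd, List.map_take, List.map_drop, List.map_ofFn]

section Congruence

variable {g g' : P → S} {x : P}

theorem ncDeltaInv_congr (h : ∀ z, x ≤ z → g z = g' z) : ncDeltaInv g x = ncDeltaInv g' x := by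
  simp only [ncDeltaInv_eq_sum_revProd, revProd]
  refine Finset.sum_congr rfl fun k _ => Finset.sum_congr rfl fun c hc => ?_
  obtain ⟨hsat, rfl, -⟩ := (mem_filter.1 hc).2
  rw [List.map_congr_left fun z hz => ?_]
  obtain ⟨i, rfl⟩ := (List.mem_ofFn' c z).1 hz
  exact h _ (hsat.strictMono.monotone (Fin.zero_le i))

theorem ncNablaInv_congr (h : ∀ z, z ≤ x → g z = g' z) : ncNablaInv g x = ncNablaInv g' x := by
  simp only [ncNablaInv_eq_sum_revProd, revProd]
  refine Finset.sum_congr rfl fun k _ => Finset.sum_congr rfl fun c hc => ?_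
  obtain ⟨hsat, -, rfl⟩ := (mem_filter.1 hc).2
  rw [List.map_congr_left fun z hz => ?_]
  obtain ⟨i, rfl⟩ := (List.mem_ofFn' c z).1 hz
  exact h _ (hsat.strictMono.monotone (Fin.le_last i))

theorem deltaInvAbove_congr (h : ∀ z, x < z → g z = g' z) :
    deltaInvAbove g x = deltaInvAbove g' x := by
  simp only [deltaInvAbove]
  congr 1
  exact Finset.sum_congr rfl fun y hy =>
    ncDeltaInv_congr fun z hz => h z ((mem_filter.1 hy).2.lt.trans_le hz)

end Congruence

section Toggles

variable {C : S} {g : P → S} {A : Set P} {x v : P}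

noncomputable def mixedLabeling (C : S) (g : P → S) (A : Set P) : P → S :=
  fun u => if u ∈ A then ncNablaInv g u else C * (ncDeltaInv g u)⁻¹

theorem ncTheta_ncDeltaInv_eq_mixedLabeling_empty :
    ncTheta C (ncDeltaInv g) = mixedLabeling C g ∅ := by
  funext u
  simp [ncTheta, mixedLabeling]

theorem mixedLabeling_insert (hx : x ∉ A) :
    mixedLabeling C g (insert x A)
      = Function.update (mixedLabeling C g A) x (ncNablaInv g x) := by
  funext u
  by_cases hu : u = x
  · subst hu; simp [mixedLabeling]
  · simp [mixedLabeling, hu]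

theorem ncT_eq_update (f : P → S) :
    ncT C v f = Function.update f v (lSum f v * (f v)⁻¹ * (uInvSum C f v)⁻¹) := by
  funext u
  simp [ncT, Function.update_apply]

theorem ncE_eq_update (f : P → S) :
    ncE C v f = Function.update f v ((uInvSum C f v)⁻¹ * (f v)⁻¹ * lSum f v) := by
  funext u
  simp [ncE, Function.update_apply]

theorem lSum_mixedLabeling (hlow : ∀ u, u ⋖ x → u ∈ A) :
    lSum (mixedLabeling C g A) x = nablaInvBelow g x := by
  simp only [lSum, nablaInvBelow]
  congr 1
  exact Finset.sum_congr rfl fun u hu => if_pos (hlow u (mem_filter.1 hu).2)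

theorem uInvSum_mixedLabeling (hup : ∀ y, x ⋖ y → y ∉ A) :
    uInvSum C (mixedLabeling C g A) x = deltaInvAbove g x * C⁻¹ := by
  simp only [uInvSum, deltaInvAbove, add_mul, Finset.sum_mul, ite_mul, one_mul, zero_mul]
  congr 1
  refine Finset.sum_congr rfl fun y hy => ?_
  rw [mixedLabeling, if_neg (hup y (mem_filter.1 hy).2), mul_inv_rev, inv_inv]

theorem ncE_mixedLabeling (hC : ∀ s : S, Commute C s) (hC0 : C ≠ 0)
    (hM : deltaInvAbove g x ≠ 0) (hx : x ∉ A) (hlow : ∀ u, u ⋖ x → u ∈ A)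
    (hup : ∀ y, x ⋖ y → y ∉ A) :
    ncE C x (mixedLabeling C g A) = mixedLabeling C g (insert x A) := by
  rw [ncE_eq_update, lSum_mixedLabeling hlow, uInvSum_mixedLabeling hup, mixedLabeling_insert hx,
    mixedLabeling, if_neg hx, ncDeltaInv_eq_mul, ncNablaInv_eq_mul]
  simp only [mul_inv_rev, inv_inv, mul_assoc, inv_mul_cancel_left₀ hM, (hC _).left_comm,
    inv_mul_cancel_left₀ hC0]

theorem ncT_mixedLabeling_insert (hC : ∀ s : S, Commute C s) (hW : nablaInvBelow g x ≠ 0)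
    (hx : x ∉ A) (hlow : ∀ u, u ⋖ x → u ∈ A) (hup : ∀ y, x ⋖ y → y ∉ A) :
    ncT C x (mixedLabeling C g (insert x A)) = mixedLabeling C g A := by
  rw [ncT_eq_update, lSum_mixedLabeling fun u hu => Set.mem_insert_of_mem x (hlow u hu),
    uInvSum_mixedLabeling fun y hy => by simp [hy.ne', hup y hy], mixedLabeling_insert hx,
    Function.update_self, Function.update_idem, Function.update_eq_self_iff, mixedLabeling,
    if_neg hx, ncNablaInv_eq_mul, ncDeltaInv_eq_mul]
  simp only [mul_inv_rev, inv_inv, mul_inv_cancel_left₀ hW, (hC _).left_comm]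

theorem mixedLabeling_eq_update {g' : P → S} (hg : ∀ z, z ≠ v → g' z = g z) :
    mixedLabeling C g' {u | u < v}
      = Function.update (mixedLabeling C g {u | u < v}) v
          (C * (deltaInvAbove g v * g' v)⁻¹) := by
  funext u
  by_cases hu : u = v
  · subst hu
    simp [mixedLabeling, ncDeltaInv_eq_mul, deltaInvAbove_congr fun z hz => hg z hz.ne']
  rw [Function.update_of_ne hu, mixedLabeling, mixedLabeling]
  split_ifs with hlt
  · exact ncNablaInv_congr fun z hz => hg z (hz.trans_lt hlt).ne
  · exact congrArg _ (congrArg _ (ncDeltaInv_congr fun z hz => hg z fun hzv =>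
      hlt ((hzv ▸ hz).lt_of_ne hu)))

theorem ncT_mixedLabeling_ncTau (hC : ∀ s : S, Commute C s) (hC0 : C ≠ 0) :
    ncT C v (mixedLabeling C g {u | u < v}) = mixedLabeling C (ncTau C v g) {u | u < v} := by
  rw [ncT_eq_update, lSum_mixedLabeling (A := {u | u < v}) fun u hu => hu.lt,
    uInvSum_mixedLabeling (A := {u | u < v}) fun y hy => hy.lt.not_gt,
    mixedLabeling_eq_update (g' := ncTau C v g) fun z hz => if_neg hz, mixedLabeling,
    if_neg (show v ∉ {u | u < v} from lt_irrefl v), ncTau,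
    if_pos rfl, tauDenom_eq_mul]
  congr 1
  simp only [mul_inv_rev, inv_inv, mul_assoc, inv_mul_cancel_left₀ hC0, (hC _).left_comm,
    (hC _).inv_left₀.left_comm]

theorem ncE_mixedLabeling_ncEps (hC : ∀ s : S, Commute C s) (hC0 : C ≠ 0)
    (hM : deltaInvAbove g v ≠ 0) :
    ncE C v (mixedLabeling C g {u | u < v}) = mixedLabeling C (ncEps C v g) {u | u < v} := by
  rw [ncE_eq_update, lSum_mixedLabeling (A := {u | u < v}) fun u hu => hu.lt,
    uInvSum_mixedLabeling (A := {u | u < v}) fun y hy => hy.lt.not_gt,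
    mixedLabeling_eq_update (g' := ncEps C v g) fun z hz => if_neg hz, mixedLabeling,
    if_neg (show v ∉ {u | u < v} from lt_irrefl v), ncEps,
    if_pos rfl, epsDenom_eq_mul, ncDeltaInv_eq_mul, ncNablaInv_eq_mul]
  congr 1
  simp only [mul_inv_rev, inv_inv, mul_assoc, inv_mul_cancel_left₀ hM, inv_mul_cancel_left₀ hC0,
    (hC _).left_comm, mul_inv_cancel₀ hM, mul_one]

end Toggles

section LinearExtensions

theorem IsLinearExtensionOn.pairwise {α : Type*} [PartialOrder α] {A : Set α} {l : List α}
    (h : IsLinearExtensionOn A l) : l.Pairwise fun a b => ¬ b < a :=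
  List.pairwise_iff_getElem.2 fun i j hi hj hij hlt => (h.2.2 j i hj hi hlt).not_gt hij

theorem boundary_of_eq_append_cons {α : Type*} [PartialOrder α] {l p q : List α} {x : α}
    (hsorted : l.Pairwise fun a b => ¬ b < a) (hnodup : l.Nodup)
    (hdown : ∀ x ∈ l, ∀ u, u ⋖ x → u ∈ l) (h : l = p ++ x :: q) :
    x ∉ p ∧ (∀ u, u ⋖ x → u ∈ p) ∧ ∀ y, x ⋖ y → y ∉ p := by
  subst h
  have hcross := (List.pairwise_append.1 hsorted).2.2
  refine ⟨fun hx => (List.nodup_append.1 hnodup).2.2 x hx x List.mem_cons_self rfl,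
    fun u hu => ?_, fun y hy hyp => hcross y hyp x List.mem_cons_self hy.lt⟩
  rcases List.mem_append.1 (hdown x (by simp) u hu) with hup | hu'
  · exact hup
  rcases List.mem_cons.1 hu' with rfl | huq
  · exact (lt_irrefl u hu.lt).elim
  · exact ((List.pairwise_cons.1 (List.pairwise_append.1 hsorted).2.1).1 u huq hu.lt).elim

end LinearExtensions

section Sweeps

variable {C : S} {g : P → S} {lev : List P}

theorem applyOOps_append (l₁ l₂ : List (OOp P)) (f : P → S) :
    applyOOps C (l₁ ++ l₂) f = applyOOps C l₂ (applyOOps C l₁ f) :=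
  List.foldl_append

theorem OOpsDef.of_append : ∀ {l₁ l₂ : List (OOp P)} {f : P → S},
    OOpsDef C (l₁ ++ l₂) f → OOpsDef C l₂ (applyOOps C l₁ f)
  | [], _, _, h => h
  | _ :: l₁, l₂, _, h => OOpsDef.of_append (l₁ := l₁) (l₂ := l₂) h.2

theorem ne_zero_of_OOpsDef_ncTheta {F : P → S} {l : List (OOp P)} (hl : l ≠ [])
    (h : OOpsDef C l (ncTheta C F)) : C ≠ 0 := by
  obtain ⟨o, l, rfl⟩ := List.exists_cons_of_ne_nil hl
  exact left_ne_zero_of_mul h.1.1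

theorem applyOOps_map_E_mixedLabeling (hC : ∀ s : S, Commute C s) (hC0 : C ≠ 0)
    (hsorted : lev.Pairwise fun a b => ¬ b < a) (hnodup : lev.Nodup)
    (hdown : ∀ x ∈ lev, ∀ u, u ⋖ x → u ∈ lev) (hM : ∀ x ∈ lev, deltaInvAbove g x ≠ 0) :
    ∀ q p : List P, lev = p ++ q →
      applyOOps C (q.map OOp.E) (mixedLabeling C g {u | u ∈ p})
        = mixedLabeling C g {u | u ∈ lev} := by
  intro q
  induction q with
  | nil => intro p h; simp [h, applyOOps]
  | cons x q ih =>
    intro p h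
    obtain ⟨hx, hlow, hup⟩ := boundary_of_eq_append_cons hsorted hnodup hdown h
    have step : ncE C x (mixedLabeling C g {u | u ∈ p}) = mixedLabeling C g {u | u ∈ p ++ [x]} := by
      rw [setOf_mem_append_singleton]
      exact ncE_mixedLabeling hC hC0 (hM x (by simp [h])) hx hlow hup
    exact (congrArg _ step).trans (ih (p ++ [x]) (by simp [h]))

theorem applyOOps_map_T_mixedLabeling (hC : ∀ s : S, Commute C s)
    (hsorted : lev.Pairwise fun a b => ¬ b < a) (hnodup : lev.Nodup)
    (hdown : ∀ x ∈ lev, ∀ u, u ⋖ x → u ∈ lev) :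
    ∀ p q : List P, lev = p ++ q →
      OOpsDef C (p.reverse.map OOp.T) (mixedLabeling C g {u | u ∈ p}) →
      applyOOps C (p.reverse.map OOp.T) (mixedLabeling C g {u | u ∈ p}) = mixedLabeling C g ∅ := by
  intro p
  induction p using List.reverseRecOn with
  | nil => intro _ _ _; simp [applyOOps]
  | append_singleton p x ih =>
    intro q h hdef
    have h' : lev = p ++ x :: q := by simp [h]
    obtain ⟨hx, hlow, hup⟩ := boundary_of_eq_append_cons hsorted hnodup hdown h'
    simp only [List.reverse_append, List.reverse_singleton, List.singleton_append, List.map_cons,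
      setOf_mem_append_singleton] at hdef ⊢
    have hW : nablaInvBelow g x ≠ 0 := by
      have hx0 : mixedLabeling C g (insert x {u | u ∈ p}) x ≠ 0 := hdef.1.1
      rw [mixedLabeling, if_pos (Set.mem_insert x _), ncNablaInv_eq_mul] at hx0
      exact right_ne_zero_of_mul hx0
    have step := ncT_mixedLabeling_insert hC hW hx hlow hup
    exact (congrArg _ step).trans (ih (x :: q) h' (step ▸ hdef.2))

end Sweeps

theorem applyOOps_conj_eq {C : S} {g g' : P → S} {v : P} {lev : List P} {o : OOp P}
    (hC : ∀ s : S, Commute C s) (hC0 : C ≠ 0) (hlev : IsLinearExtensionOn {x | x < v} lev)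
    (hM : ∀ x ∈ lev, deltaInvAbove g x ≠ 0)
    (hmid : applyOOp C o (mixedLabeling C g {u | u < v}) = mixedLabeling C g' {u | u < v})
    (hdef : OOpsDef C (lev.map OOp.E ++ [o] ++ lev.reverse.map OOp.T)
      (ncTheta C (ncDeltaInv g))) :
    applyOOps C (lev.map OOp.E ++ [o] ++ lev.reverse.map OOp.T) (ncTheta C (ncDeltaInv g))
      = ncTheta C (ncDeltaInv g') := by
  have hdown : ∀ x ∈ lev, ∀ u, u ⋖ x → u ∈ lev := fun x hx u hu =>
    (hlev.2.1 u).2 (hu.lt.trans ((hlev.2.1 x).1 hx))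
  have hset : {u | u ∈ lev} = {u | u < v} := Set.ext hlev.2.1
  have hstart : ncTheta C (ncDeltaInv g) = mixedLabeling C g {u | u ∈ ([] : List P)} := by
    simp [ncTheta_ncDeltaInv_eq_mixedLabeling_empty]
  have hconj : applyOOps C (lev.map OOp.E ++ [o]) (ncTheta C (ncDeltaInv g))
      = mixedLabeling C g' {u | u ∈ lev} := by
    rw [applyOOps_append, hstart,
      applyOOps_map_E_mixedLabeling hC hC0 hlev.pairwise hlev.1 hdown hM lev [] rfl, hset]
    exact hmid
  rw [applyOOps_append, hconj, ncTheta_ncDeltaInv_eq_mixedLabeling_empty]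
  exact applyOOps_map_T_mixedLabeling hC hlev.pairwise hlev.1 hdown lev [] (by simp)
    (hconj ▸ hdef.of_append)

/-- Let `v ∈ P` and let `lev = (x₁,…,x_k)` be a linear extension of
`{x ∈ P : x < v}`.  With `η_v = T_{x₁} ∘ ⋯ ∘ T_{x_k}`, `τ_v* = η_v ∘ T_v ∘ η_v⁻¹` and
`ε_v* = η_v ∘ E_v ∘ η_v⁻¹` (realized by the operation sequences `tauStarOps v lev` and
`epsStarOps v lev`), we have `Θ ∘ Δ⁻¹ ∘ τ_v = τ_v* ∘ Θ ∘ Δ⁻¹` and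
`Θ ∘ Δ⁻¹ ∘ ε_v = ε_v* ∘ Θ ∘ Δ⁻¹`, on all `S`-labelings for which both sides
are defined. -/
theorem theta_deltaInv_ncTau_eq_tauStar (C : S) (hC : ∀ s : S, C * s = s * C) (v : P)
    (lev : List P) (hlev : IsLinearExtensionOn {x : P | x < v} lev) (g : P → S) :
    (tauDenom g v ≠ 0 →
     (∀ x : P, ncDeltaInv (ncTau C v g) x ≠ 0) →
     (∀ x : P, ncDeltaInv g x ≠ 0) →
     OOpsDef C (tauStarOps v lev) (ncTheta C (ncDeltaInv g)) →
      ncTheta C (ncDeltaInv (ncTau C v g))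
        = applyOOps C (tauStarOps v lev) (ncTheta C (ncDeltaInv g))) ∧
    (epsDenom g v ≠ 0 →
     (∀ x : P, ncDeltaInv (ncEps C v g) x ≠ 0) →
     (∀ x : P, ncDeltaInv g x ≠ 0) →
     OOpsDef C (epsStarOps v lev) (ncTheta C (ncDeltaInv g)) →
      ncTheta C (ncDeltaInv (ncEps C v g))
        = applyOOps C (epsStarOps v lev) (ncTheta C (ncDeltaInv g))) := by
  have hM : ∀ x, ncDeltaInv g x ≠ 0 → deltaInvAbove g x ≠ 0 := fun x hx =>
    left_ne_zero_of_mul (ncDeltaInv_eq_mul g x ▸ hx)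
  refine ⟨fun _ _ hD hdef => ?_, fun _ _ hD hdef => ?_⟩
  · have hC0 := ne_zero_of_OOpsDef_ncTheta (by simp [tauStarOps]) hdef
    exact (applyOOps_conj_eq hC hC0 hlev (fun x _ => hM x (hD x))
      (o := OOp.T v) (ncT_mixedLabeling_ncTau hC hC0) hdef).symm
  · have hC0 := ne_zero_of_OOpsDef_ncTheta (by simp [epsStarOps]) hdef
    exact (applyOOps_conj_eq hC hC0 hlev (fun x _ => hM x (hD x))
      (o := OOp.E v) (ncE_mixedLabeling_ncEps hC hC0 (hM v (hD v))) hdef).symm
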